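/- The suprema and infima operations on normal types are correct with respect to precedence: Prec(τ₁, τ) and Prec(τ₂, τ) both hold iff Prec(sup(τ₁, τ₂), τ) holds; dually Prec(τ, τ₁) and Prec(τ, τ₂) both hold iff Prec(τ, inf(τ₁, τ₂)) holds (whenever the sup/inf are defined, i.e. τ₁ and τ₂ have the same shape). -/
import Mathlib

inductive Ty (G W : Type) where
  | ground : G → Ty G W
  | stream : Ty G W → Ty G W
  | arrow  : Ty G W → Ty G W → Ty G W
  | prod   : Ty G W → Ty G W → Ty G W
  | sum    : Ty G W → Ty G W → Ty G W
  | warp   : W → Ty G W → Ty G W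

/-- The precedence relation on types, over a lattice-ordered monoid of warps. -/
inductive Prec {G W : Type} [Lattice W] : Ty G W → Ty G W → Prop
  | ground (g : G) : Prec (Ty.ground g) (Ty.ground g)
  | stream {a b : Ty G W} : Prec a b → Prec (Ty.stream a) (Ty.stream b)
  | arrow {a₁ b₁ a₂ b₂ : Ty G W} : Prec a₂ a₁ → Prec b₁ b₂ →
      Prec (Ty.arrow a₁ b₁) (Ty.arrow a₂ b₂)
  | prod {a₁ b₁ a₂ b₂ : Ty G W} : Prec a₁ a₂ → Prec b₁ b₂ →
      Prec (Ty.prod a₁ b₁) (Ty.prod a₂ b₂)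
  | sum {a₁ b₁ a₂ b₂ : Ty G W} : Prec a₁ a₂ → Prec b₁ b₂ →
      Prec (Ty.sum a₁ b₁) (Ty.sum a₂ b₂)
  | warp {p q : W} {a b : Ty G W} : q ≤ p → Prec a b →
      Prec (Ty.warp p a) (Ty.warp q b)

mutual
  /-- `TySup τ₁ τ₂ τ` holds when `τ` is the structural supremum of `τ₁`, `τ₂`
  (defined when `τ₁` and `τ₂` have the same shape). -/
  inductive TySup {G W : Type} [Lattice W] : Ty G W → Ty G W → Ty G W → Prop
    | ground (g : G) : TySup (Ty.ground g) (Ty.ground g) (Ty.ground g)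
    | stream {a b c : Ty G W} : TySup a b c →
        TySup (Ty.stream a) (Ty.stream b) (Ty.stream c)
    | arrow {a₁ a₂ b₁ b₂ c₁ c₂ : Ty G W} : TyInf a₁ b₁ c₁ → TySup a₂ b₂ c₂ →
        TySup (Ty.arrow a₁ a₂) (Ty.arrow b₁ b₂) (Ty.arrow c₁ c₂)
    | prod {a₁ a₂ b₁ b₂ c₁ c₂ : Ty G W} : TySup a₁ b₁ c₁ → TySup a₂ b₂ c₂ →
        TySup (Ty.prod a₁ a₂) (Ty.prod b₁ b₂) (Ty.prod c₁ c₂)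
    | sum {a₁ a₂ b₁ b₂ c₁ c₂ : Ty G W} : TySup a₁ b₁ c₁ → TySup a₂ b₂ c₂ →
        TySup (Ty.sum a₁ a₂) (Ty.sum b₁ b₂) (Ty.sum c₁ c₂)
    | warp {p q : W} {a b c : Ty G W} : TySup a b c →
        TySup (Ty.warp p a) (Ty.warp q b) (Ty.warp (p ⊓ q) c)
  /-- `TyInf τ₁ τ₂ τ` holds when `τ` is the structural infimum of `τ₁`, `τ₂`. -/
  inductive TyInf {G W : Type} [Lattice W] : Ty G W → Ty G W → Ty G W → Prop
    | ground (g : G) : TyInf (Ty.ground g) (Ty.ground g) (Ty.ground g)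
    | stream {a b c : Ty G W} : TyInf a b c →
        TyInf (Ty.stream a) (Ty.stream b) (Ty.stream c)
    | arrow {a₁ a₂ b₁ b₂ c₁ c₂ : Ty G W} : TySup a₁ b₁ c₁ → TyInf a₂ b₂ c₂ →
        TyInf (Ty.arrow a₁ a₂) (Ty.arrow b₁ b₂) (Ty.arrow c₁ c₂)
    | prod {a₁ a₂ b₁ b₂ c₁ c₂ : Ty G W} : TyInf a₁ b₁ c₁ → TyInf a₂ b₂ c₂ →
        TyInf (Ty.prod a₁ a₂) (Ty.prod b₁ b₂) (Ty.prod c₁ c₂)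
    | sum {a₁ a₂ b₁ b₂ c₁ c₂ : Ty G W} : TyInf a₁ b₁ c₁ → TyInf a₂ b₂ c₂ →
        TyInf (Ty.sum a₁ a₂) (Ty.sum b₁ b₂) (Ty.sum c₁ c₂)
    | warp {p q : W} {a b c : Ty G W} : TyInf a b c →
        TyInf (Ty.warp p a) (Ty.warp q b) (Ty.warp (p ⊔ q) c)
end

section Helpers
variable {G W : Type} [Lattice W]

private lemma sup_stream_aux {a b c : Ty G W}
    (IH : ∀ τ, (Prec a τ ∧ Prec b τ) ↔ Prec c τ) :
    ∀ τ, (Prec a.stream τ ∧ Prec b.stream τ) ↔ Prec c.stream τ := by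
  intro τ
  constructor
  · rintro ⟨ha, hb⟩
    cases ha with | stream x => cases hb with | stream y =>
      exact Prec.stream ((IH _).mp ⟨x, y⟩)
  · intro h
    cases h with | stream x =>
      obtain ⟨u, v⟩ := (IH _).mpr x
      exact ⟨Prec.stream u, Prec.stream v⟩

private lemma inf_stream_aux {a b c : Ty G W}
    (IH : ∀ τ, (Prec τ a ∧ Prec τ b) ↔ Prec τ c) :
    ∀ τ, (Prec τ a.stream ∧ Prec τ b.stream) ↔ Prec τ c.stream := by
  intro τ
  constructor
  · rintro ⟨ha, hb⟩
    cases ha with | stream x => cases hb with | stream y =>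
      exact Prec.stream ((IH _).mp ⟨x, y⟩)
  · intro h
    cases h with | stream x =>
      obtain ⟨u, v⟩ := (IH _).mpr x
      exact ⟨Prec.stream u, Prec.stream v⟩

private lemma sup_arrow_aux {a₁ a₂ b₁ b₂ c₁ c₂ : Ty G W}
    (IH1 : ∀ τ, (Prec τ a₁ ∧ Prec τ b₁) ↔ Prec τ c₁)
    (IH2 : ∀ τ, (Prec a₂ τ ∧ Prec b₂ τ) ↔ Prec c₂ τ) :
    ∀ τ, (Prec (Ty.arrow a₁ a₂) τ ∧ Prec (Ty.arrow b₁ b₂) τ) ↔ Prec (Ty.arrow c₁ c₂) τ := by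
  intro τ
  constructor
  · rintro ⟨ha, hb⟩
    cases ha with | arrow x₁ x₂ => cases hb with | arrow y₁ y₂ =>
      exact Prec.arrow ((IH1 _).mp ⟨x₁, y₁⟩) ((IH2 _).mp ⟨x₂, y₂⟩)
  · intro h
    cases h with | arrow x₁ x₂ =>
      obtain ⟨u₁, v₁⟩ := (IH1 _).mpr x₁
      obtain ⟨u₂, v₂⟩ := (IH2 _).mpr x₂
      exact ⟨Prec.arrow u₁ u₂, Prec.arrow v₁ v₂⟩

private lemma inf_arrow_aux {a₁ a₂ b₁ b₂ c₁ c₂ : Ty G W}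
    (IH1 : ∀ τ, (Prec a₁ τ ∧ Prec b₁ τ) ↔ Prec c₁ τ)
    (IH2 : ∀ τ, (Prec τ a₂ ∧ Prec τ b₂) ↔ Prec τ c₂) :
    ∀ τ, (Prec τ (Ty.arrow a₁ a₂) ∧ Prec τ (Ty.arrow b₁ b₂)) ↔ Prec τ (Ty.arrow c₁ c₂) := by
  intro τ
  constructor
  · rintro ⟨ha, hb⟩
    cases ha with | arrow x₁ x₂ => cases hb with | arrow y₁ y₂ =>
      exact Prec.arrow ((IH1 _).mp ⟨x₁, y₁⟩) ((IH2 _).mp ⟨x₂, y₂⟩)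
  · intro h
    cases h with | arrow x₁ x₂ =>
      obtain ⟨u₁, v₁⟩ := (IH1 _).mpr x₁
      obtain ⟨u₂, v₂⟩ := (IH2 _).mpr x₂
      exact ⟨Prec.arrow u₁ u₂, Prec.arrow v₁ v₂⟩

private lemma sup_prod_aux {a₁ a₂ b₁ b₂ c₁ c₂ : Ty G W}
    (IH1 : ∀ τ, (Prec a₁ τ ∧ Prec b₁ τ) ↔ Prec c₁ τ)
    (IH2 : ∀ τ, (Prec a₂ τ ∧ Prec b₂ τ) ↔ Prec c₂ τ) :
    ∀ τ, (Prec (Ty.prod a₁ a₂) τ ∧ Prec (Ty.prod b₁ b₂) τ) ↔ Prec (Ty.prod c₁ c₂) τ := by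
  intro τ
  constructor
  · rintro ⟨ha, hb⟩
    cases ha with | prod x₁ x₂ => cases hb with | prod y₁ y₂ =>
      exact Prec.prod ((IH1 _).mp ⟨x₁, y₁⟩) ((IH2 _).mp ⟨x₂, y₂⟩)
  · intro h
    cases h with | prod x₁ x₂ =>
      obtain ⟨u₁, v₁⟩ := (IH1 _).mpr x₁
      obtain ⟨u₂, v₂⟩ := (IH2 _).mpr x₂
      exact ⟨Prec.prod u₁ u₂, Prec.prod v₁ v₂⟩

private lemma inf_prod_aux {a₁ a₂ b₁ b₂ c₁ c₂ : Ty G W}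
    (IH1 : ∀ τ, (Prec τ a₁ ∧ Prec τ b₁) ↔ Prec τ c₁)
    (IH2 : ∀ τ, (Prec τ a₂ ∧ Prec τ b₂) ↔ Prec τ c₂) :
    ∀ τ, (Prec τ (Ty.prod a₁ a₂) ∧ Prec τ (Ty.prod b₁ b₂)) ↔ Prec τ (Ty.prod c₁ c₂) := by
  intro τ
  constructor
  · rintro ⟨ha, hb⟩
    cases ha with | prod x₁ x₂ => cases hb with | prod y₁ y₂ =>
      exact Prec.prod ((IH1 _).mp ⟨x₁, y₁⟩) ((IH2 _).mp ⟨x₂, y₂⟩)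
  · intro h
    cases h with | prod x₁ x₂ =>
      obtain ⟨u₁, v₁⟩ := (IH1 _).mpr x₁
      obtain ⟨u₂, v₂⟩ := (IH2 _).mpr x₂
      exact ⟨Prec.prod u₁ u₂, Prec.prod v₁ v₂⟩

private lemma sup_sum_aux {a₁ a₂ b₁ b₂ c₁ c₂ : Ty G W}
    (IH1 : ∀ τ, (Prec a₁ τ ∧ Prec b₁ τ) ↔ Prec c₁ τ)
    (IH2 : ∀ τ, (Prec a₂ τ ∧ Prec b₂ τ) ↔ Prec c₂ τ) :
    ∀ τ, (Prec (Ty.sum a₁ a₂) τ ∧ Prec (Ty.sum b₁ b₂) τ) ↔ Prec (Ty.sum c₁ c₂) τ := by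
  intro τ
  constructor
  · rintro ⟨ha, hb⟩
    cases ha with | sum x₁ x₂ => cases hb with | sum y₁ y₂ =>
      exact Prec.sum ((IH1 _).mp ⟨x₁, y₁⟩) ((IH2 _).mp ⟨x₂, y₂⟩)
  · intro h
    cases h with | sum x₁ x₂ =>
      obtain ⟨u₁, v₁⟩ := (IH1 _).mpr x₁
      obtain ⟨u₂, v₂⟩ := (IH2 _).mpr x₂
      exact ⟨Prec.sum u₁ u₂, Prec.sum v₁ v₂⟩

private lemma inf_sum_aux {a₁ a₂ b₁ b₂ c₁ c₂ : Ty G W}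
    (IH1 : ∀ τ, (Prec τ a₁ ∧ Prec τ b₁) ↔ Prec τ c₁)
    (IH2 : ∀ τ, (Prec τ a₂ ∧ Prec τ b₂) ↔ Prec τ c₂) :
    ∀ τ, (Prec τ (Ty.sum a₁ a₂) ∧ Prec τ (Ty.sum b₁ b₂)) ↔ Prec τ (Ty.sum c₁ c₂) := by
  intro τ
  constructor
  · rintro ⟨ha, hb⟩
    cases ha with | sum x₁ x₂ => cases hb with | sum y₁ y₂ =>
      exact Prec.sum ((IH1 _).mp ⟨x₁, y₁⟩) ((IH2 _).mp ⟨x₂, y₂⟩)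
  · intro h
    cases h with | sum x₁ x₂ =>
      obtain ⟨u₁, v₁⟩ := (IH1 _).mpr x₁
      obtain ⟨u₂, v₂⟩ := (IH2 _).mpr x₂
      exact ⟨Prec.sum u₁ u₂, Prec.sum v₁ v₂⟩

private lemma sup_warp_aux {p q : W} {a b c : Ty G W}
    (IH : ∀ τ, (Prec a τ ∧ Prec b τ) ↔ Prec c τ) :
    ∀ τ, (Prec (Ty.warp p a) τ ∧ Prec (Ty.warp q b) τ) ↔ Prec (Ty.warp (p ⊓ q) c) τ := by
  intro τ
  constructor
  · rintro ⟨ha, hb⟩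
    cases ha with | warp h₁ x => cases hb with | warp h₂ y =>
      exact Prec.warp (le_inf h₁ h₂) ((IH _).mp ⟨x, y⟩)
  · intro h
    cases h with | warp hle x =>
      obtain ⟨u, v⟩ := (IH _).mpr x
      exact ⟨Prec.warp (hle.trans inf_le_left) u, Prec.warp (hle.trans inf_le_right) v⟩

private lemma inf_warp_aux {p q : W} {a b c : Ty G W}
    (IH : ∀ τ, (Prec τ a ∧ Prec τ b) ↔ Prec τ c) :
    ∀ τ, (Prec τ (Ty.warp p a) ∧ Prec τ (Ty.warp q b)) ↔ Prec τ (Ty.warp (p ⊔ q) c) := by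
  intro τ
  constructor
  · rintro ⟨ha, hb⟩
    cases ha with | warp h₁ x => cases hb with | warp h₂ y =>
      exact Prec.warp (sup_le h₁ h₂) ((IH _).mp ⟨x, y⟩)
  · intro h
    cases h with | warp hle x =>
      obtain ⟨u, v⟩ := (IH _).mpr x
      exact ⟨Prec.warp (le_sup_left.trans hle) u, Prec.warp (le_sup_right.trans hle) v⟩

end Helpers

/-- Correctness of suprema and infima of types with respect to precedence. -/
theorem tySup_tyInf_correct {G W : Type} [Lattice W] :
    (∀ {τ₁ τ₂ τs : Ty G W}, TySup τ₁ τ₂ τs →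
      ∀ τ : Ty G W, (Prec τ₁ τ ∧ Prec τ₂ τ) ↔ Prec τs τ) ∧
    (∀ {τ₁ τ₂ τi : Ty G W}, TyInf τ₁ τ₂ τi →
      ∀ τ : Ty G W, (Prec τ τ₁ ∧ Prec τ τ₂) ↔ Prec τ τi) := by
  refine ⟨fun {τ₁ τ₂ τs} h => ?_, fun {τ₁ τ₂ τi} h => ?_⟩
  · exact TySup.rec
      (motive_1 := fun a b c _ => ∀ τ, (Prec a τ ∧ Prec b τ) ↔ Prec c τ)
      (motive_2 := fun a b c _ => ∀ τ, (Prec τ a ∧ Prec τ b) ↔ Prec τ c)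
      (fun _ _ => and_self_iff)
      (fun _ ih => sup_stream_aux ih)
      (fun _ _ ih1 ih2 => sup_arrow_aux ih1 ih2)
      (fun _ _ ih1 ih2 => sup_prod_aux ih1 ih2)
      (fun _ _ ih1 ih2 => sup_sum_aux ih1 ih2)
      (fun _ ih => sup_warp_aux ih)
      (fun _ _ => and_self_iff)
      (fun _ ih => inf_stream_aux ih)
      (fun _ _ ih1 ih2 => inf_arrow_aux ih1 ih2)
      (fun _ _ ih1 ih2 => inf_prod_aux ih1 ih2)
      (fun _ _ ih1 ih2 => inf_sum_aux ih1 ih2)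
      (fun _ ih => inf_warp_aux ih)
      h
  · exact TyInf.rec
      (motive_1 := fun a b c _ => ∀ τ, (Prec a τ ∧ Prec b τ) ↔ Prec c τ)
      (motive_2 := fun a b c _ => ∀ τ, (Prec τ a ∧ Prec τ b) ↔ Prec τ c)
      (fun _ _ => and_self_iff)
      (fun _ ih => sup_stream_aux ih)
      (fun _ _ ih1 ih2 => sup_arrow_aux ih1 ih2)
      (fun _ _ ih1 ih2 => sup_prod_aux ih1 ih2)
      (fun _ _ ih1 ih2 => sup_sum_aux ih1 ih2)
      (fun _ ih => sup_warp_aux ih)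
      (fun _ _ => and_self_iff)
      (fun _ ih => inf_stream_aux ih)
      (fun _ _ ih1 ih2 => inf_arrow_aux ih1 ih2)
      (fun _ _ ih1 ih2 => inf_prod_aux ih1 ih2)
      (fun _ _ ih1 ih2 => inf_sum_aux ih1 ih2)
      (fun _ ih => inf_warp_aux ih)
      h
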